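/- arXiv:2403.02552 — 2 statements merged into one kernel-verified Lean document; each statement's English description precedes it below -/
import Mathlib

section
/- Let m be an odd positive integer and ℓ ≥ 2. The number of orbits of arbitrary ℓ-tuples of elements of the dihedral group D_{2m} under simultaneous conjugation equals (2^ℓ + m^{ℓ−1}(2^ℓ − 1) + m^ℓ)/2. -/
/-- Simultaneous conjugation on arbitrary `ℓ`-tuples in a group `G`;
`G^ℓ` is identified with `Hom(F_ℓ, G)`. -/
def conjRel (G : Type*) [Group G] (ℓ : ℕ) (s t : Fin ℓ → G) : Prop :=
  ∃ g : G, ∀ i, t i = g * s i * g⁻¹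

/-!
Burnside's lemma for the conjugation action on `G^ℓ`: a tuple is fixed by `g` iff each entry
lies in the centralizer of `g`, so `#orbits · |G| = ∑_g |C(g)|^ℓ`. In `D_{2m}` with `m` odd,
`C(1)` is everything, `C(r^i) = ⟨r⟩` for `i ≠ 0`, and `C(s r^i) = {1, s r^i}`, because
`2` is invertible mod `m`. Hence `2m · #orbits = (2m)^ℓ + (m - 1) m^ℓ + m 2^ℓ`.
-/

open MulAction DihedralGroup

section SimultaneousConjugation

variable (G : Type*) [Group G]

lemma conjRel_iff_orbitRel (ℓ : ℕ) (s t : Fin ℓ → G) :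
    conjRel G ℓ s t ↔ orbitRel (ConjAct G) (Fin ℓ → G) s t := by
  rw [orbitRel_apply, mem_orbit_symm]
  constructor
  · rintro ⟨g, hg⟩
    exact ⟨ConjAct.toConjAct g, funext fun i => by simp [ConjAct.smul_def, hg i]⟩
  · rintro ⟨g, rfl⟩
    exact ⟨ConjAct.ofConjAct g, fun i => by simp [ConjAct.smul_def]⟩

def quotConjRelEquiv (ℓ : ℕ) :
    Quot (conjRel G ℓ) ≃ orbitRel.Quotient (ConjAct G) (Fin ℓ → G) :=
  Quot.congr (Equiv.refl _) (conjRel_iff_orbitRel G ℓ)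

variable {G}

def fixedByConjActPiEquiv (ι : Type*) (g : G) :
    fixedBy (ι → G) (ConjAct.toConjAct g) ≃ (ι → {h // Commute g h}) :=
  (Equiv.subtypeEquivRight fun f => by
    simp only [mem_fixedBy, funext_iff, Pi.smul_apply, ConjAct.smul_def,
      ConjAct.ofConjAct_toConjAct, mul_inv_eq_iff_eq_mul]; rfl).trans
    Equiv.subtypePiEquivPi

variable (G)

theorem card_quot_conjRel_mul_card [Fintype G] (ℓ : ℕ) :
    Nat.card (Quot (conjRel G ℓ)) * Nat.card G = ∑ g : G, Nat.card {h // Commute g h} ^ ℓ := by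
  rw [Nat.card_congr (quotConjRelEquiv G ℓ), Nat.card_congr (ConjAct.toConjAct (G := G)).toEquiv,
    ← Nat.card_prod,
    ← Nat.card_congr (sigmaFixedByEquivOrbitsProdGroup (ConjAct G) (Fin ℓ → G)), Nat.card_sigma]
  refine (Fintype.sum_equiv ConjAct.toConjAct.toEquiv _ _ fun g => ?_).symm
  rw [MulEquiv.toEquiv_eq_coe, MulEquiv.coe_toEquiv,
    Nat.card_congr (fixedByConjActPiEquiv (Fin ℓ) g), Nat.card_fun, Nat.card_fin]

end SimultaneousConjugation

namespace DihedralGroup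

variable {m : ℕ}

theorem commute_r_r (i j : ZMod m) : Commute (r i) (r j) := by
  rw [Commute, SemiconjBy, r_mul_r, r_mul_r, add_comm]

theorem commute_r_sr_iff (hodd : Odd m) (i j : ZMod m) : Commute (r i) (sr j) ↔ i = 0 := by
  rw [Commute, SemiconjBy, r_mul_sr, sr_mul_r, sr.injEq, sub_eq_add_neg, add_left_cancel_iff,
    neg_eq_iff_add_eq_zero, ZMod.add_self_eq_zero_iff_eq_zero hodd]

theorem commute_sr_r_iff (hodd : Odd m) (i j : ZMod m) : Commute (sr i) (r j) ↔ j = 0 :=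
  Commute.symm_iff.trans (commute_r_sr_iff hodd j i)

theorem commute_sr_sr_iff (hodd : Odd m) (i j : ZMod m) : Commute (sr i) (sr j) ↔ i = j := by
  rw [Commute, SemiconjBy, sr_mul_sr, sr_mul_sr, r.injEq, ← neg_sub, neg_eq_iff_add_eq_zero,
    ZMod.add_self_eq_zero_iff_eq_zero hodd, sub_eq_zero, eq_comm]

theorem nat_card_subtype [NeZero m] (p : DihedralGroup m → Prop) :
    Nat.card {g // p g} = Nat.card {i // p (r i)} + Nat.card {i // p (sr i)} := by
  rw [← Nat.card_sum]
  exact Nat.card_congr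
    ((equivSum.subtypeEquiv (q := fun x => p (equivSum.symm x)) fun g => by cases g <;> rfl).trans
      Equiv.subtypeSum)

theorem nat_card_commute_one : Nat.card {g // Commute (1 : DihedralGroup m) g} = 2 * m := by
  rw [Nat.card_congr (Equiv.subtypeUnivEquiv Commute.one_left), nat_card]

variable [NeZero m]

theorem nat_card_commute_r (hodd : Odd m) {i : ZMod m} (hi : i ≠ 0) :
    Nat.card {g // Commute (r i) g} = m := by
  simp [nat_card_subtype, commute_r_r, commute_r_sr_iff hodd, hi]

theorem nat_card_commute_sr (hodd : Odd m) (i : ZMod m) :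
    Nat.card {g // Commute (sr i) g} = 2 := by
  simp [nat_card_subtype, commute_sr_r_iff hodd, commute_sr_sr_iff hodd]

theorem sum_nat_card_commute_pow (hodd : Odd m) (ℓ : ℕ) :
    ∑ g : DihedralGroup m, Nat.card {h // Commute g h} ^ ℓ =
      m * (2 ^ ℓ + m ^ (ℓ - 1) * (2 ^ ℓ - 1) + m ^ ℓ) := by
  have hrot : ∑ i ∈ Finset.univ.erase (0 : ZMod m), Nat.card {h // Commute (r i) h} ^ ℓ =
      (m - 1) * m ^ ℓ := by
    rw [Finset.sum_congr rfl fun i hi => by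
        rw [nat_card_commute_r hodd (Finset.ne_of_mem_erase hi)],
      Finset.sum_const, Finset.card_erase_of_mem (Finset.mem_univ _), Finset.card_univ, ZMod.card,
      smul_eq_mul]
  have hrefl : ∑ i : ZMod m, Nat.card {h // Commute (sr i) h} ^ ℓ = m * 2 ^ ℓ := by
    simp [nat_card_commute_sr hodd]
  rw [← equivSum.symm.sum_comp, Fintype.sum_sum_type]
  simp only [equivSum_symm_apply]
  rw [← Finset.add_sum_erase _ _ (Finset.mem_univ 0), r_zero, nat_card_commute_one, hrot, hrefl]
  have hm : 1 ≤ m := hodd.pos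
  cases ℓ with
  | zero =>
    simp only [pow_zero, mul_one, Nat.sub_self, mul_zero, add_zero]
    omega
  | succ k =>
    have h2 : 1 ≤ 2 ^ (k + 1) := Nat.one_le_two_pow
    zify [hm, h2]
    simp only [Nat.add_sub_cancel]
    ring

end DihedralGroup

theorem card_tuples_orbits_dihedral_odd_general (m : ℕ) (hodd : Odd m)
    (ℓ : ℕ) :
    2 * Nat.card (Quot (conjRel (DihedralGroup m) ℓ)) =
      2 ^ ℓ + m ^ (ℓ - 1) * (2 ^ ℓ - 1) + m ^ ℓ := by
  have : NeZero m := ⟨hodd.pos.ne'⟩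
  have burnside := card_quot_conjRel_mul_card (DihedralGroup m) ℓ
  rw [nat_card, sum_nat_card_commute_pow hodd] at burnside
  apply Nat.eq_of_mul_eq_mul_left hodd.pos
  rw [← burnside]
  ring

/-- For `m` odd and `ℓ ≥ 2`, the number of orbits of arbitrary `ℓ`-tuples of elements of the
dihedral group `D_{2m}` under simultaneous conjugation equals
`(2^ℓ + m^(ℓ-1)(2^ℓ - 1) + m^ℓ)/2`. -/
theorem card_tuples_orbits_dihedral_odd (m : ℕ) (hm : 0 < m) (hodd : Odd m)
    (ℓ : ℕ) (hℓ : 2 ≤ ℓ) :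
    2 * Nat.card (Quot (conjRel (DihedralGroup m) ℓ)) =
      2 ^ ℓ + m ^ (ℓ - 1) * (2 ^ ℓ - 1) + m ^ ℓ :=
  card_tuples_orbits_dihedral_odd_general m hodd ℓ
end

section
/- Let m be an even positive integer and ℓ ≥ 2. The number of orbits of arbitrary ℓ-tuples of elements of the dihedral group D_{2m} under simultaneous conjugation equals (4^ℓ + 2·m^{ℓ−1}(2^ℓ − 1) + m^ℓ)/2. -/
namespace DihedralAux

open DihedralGroup MulAction

variable (m : ℕ) [NeZero m]

/-- The dihedral group as a sum of two copies of `ZMod m`. -/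
def dequiv : DihedralGroup m ≃ (ZMod m ⊕ ZMod m) where
  toFun x := match x with | .r i => .inl i | .sr i => .inr i
  invFun y := match y with | .inl i => .r i | .inr i => .sr i
  left_inv := by rintro (i | i) <;> rfl
  right_inv := by rintro (i | i) <;> rfl

lemma card_split (p : DihedralGroup m → Prop) [DecidablePred p] :
    Fintype.card {x // p x} =
      Fintype.card {i : ZMod m // p (.r i)} + Fintype.card {i : ZMod m // p (.sr i)} := by
  rw [← Fintype.card_sum]
  refine Fintype.card_congr ((((dequiv m).subtypeEquiv
    (q := fun y => p ((dequiv m).symm y)) (fun a => by simp)).trans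
    Equiv.subtypeSum).trans (Equiv.sumCongr (Equiv.refl _) (Equiv.refl _)))

lemma card_torsion (hm : 0 < m) (heven : Even m) :
    Fintype.card {j : ZMod m // -j = j} = 2 := by
  classical
  obtain ⟨k, hk⟩ := heven
  have hk0 : 0 < k := by omega
  have hkm : k < m := by omega
  have hval : ((k : ZMod m)).val = k := ZMod.val_cast_of_lt hkm
  have hkne : (k : ZMod m) ≠ 0 := by
    intro h
    rw [ZMod.natCast_eq_zero_iff] at h
    exact absurd (Nat.le_of_dvd hk0 h) (by omega)
  rw [Fintype.card_subtype]
  have : (Finset.univ.filter fun j : ZMod m => -j = j) = {0, (k : ZMod m)} := by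
    ext j
    simp only [Finset.mem_filter, Finset.mem_univ, true_and, Finset.mem_insert,
      Finset.mem_singleton]
    rw [ZMod.neg_eq_self_iff]
    constructor
    · rintro (h | h)
      · exact Or.inl h
      · refine Or.inr (ZMod.val_injective m ?_)
        rw [hval]; omega
    · rintro (h | h)
      · exact Or.inl h
      · subst h
        exact Or.inr (by rw [hval]; omega)
  rw [this, Finset.card_insert_of_notMem (by simpa using hkne.symm), Finset.card_singleton]

/-- The number of elements commuting with a given element. -/
def cc (a : DihedralGroup m) : ℕ := Fintype.card {x // a * x = x * a}

lemma cc_r (i : ZMod m) : cc m (.r i) = if -i = i then 2 * m else m := by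
  rw [cc, card_split]
  have h1 : Fintype.card {j : ZMod m // DihedralGroup.r i * .r j = .r j * .r i} = m := by
    rw [Fintype.card_subtype,
      Finset.filter_true_of_mem (fun j _ => by rw [r_mul_r, r_mul_r, add_comm]),
      Finset.card_univ, ZMod.card]
  have hcond : ∀ j : ZMod m,
      (DihedralGroup.r i * .sr j = .sr j * .r i) ↔ -i = i := by
    intro j
    rw [r_mul_sr, sr_mul_r, sr.injEq, sub_eq_add_neg, add_right_inj]
  by_cases h : -i = i
  · have h2 : Fintype.card {j : ZMod m // DihedralGroup.r i * .sr j = .sr j * .r i} = m := by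
      rw [Fintype.card_subtype, Finset.filter_true_of_mem (fun j _ => (hcond j).mpr h),
        Finset.card_univ, ZMod.card]
    rw [h1, h2, if_pos h]; ring
  · have h2 : Fintype.card {j : ZMod m // DihedralGroup.r i * .sr j = .sr j * .r i} = 0 := by
      rw [Fintype.card_eq_zero_iff]
      exact ⟨fun ⟨j, hj⟩ => h ((hcond j).mp hj)⟩
    rw [h1, h2, if_neg h]; omega

lemma cc_sr (i : ZMod m) :
    cc m (.sr i) = 2 * Fintype.card {j : ZMod m // -j = j} := by
  rw [cc, card_split]
  have h1 : Fintype.card {j : ZMod m // DihedralGroup.sr i * .r j = .r j * .sr i} =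
      Fintype.card {j : ZMod m // -j = j} := by
    refine Fintype.card_congr (Equiv.subtypeEquivRight fun j => ?_)
    rw [sr_mul_r, r_mul_sr, sr.injEq, sub_eq_add_neg, add_right_inj, eq_comm]
  have h2 : Fintype.card {j : ZMod m // DihedralGroup.sr i * .sr j = .sr j * .sr i} =
      Fintype.card {j : ZMod m // -j = j} := by
    refine Fintype.card_congr ((Equiv.subRight i).subtypeEquiv fun j => ?_)
    rw [sr_mul_sr, sr_mul_sr, r.injEq, Equiv.subRight_apply]
    constructor
    · intro h; rw [neg_sub]; exact h.symm
    · intro h; rw [← neg_sub j i]; exact h.symm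
  rw [h1, h2]; ring

end DihedralAux

open MulAction DihedralAux in
/-- For `m` even positive and `ℓ ≥ 2`, the number of orbits of arbitrary `ℓ`-tuples of elements
of the dihedral group `D_{2m}` under simultaneous conjugation equals
`(4^ℓ + 2·m^(ℓ-1)(2^ℓ - 1) + m^ℓ)/2`. -/
theorem card_tuples_orbits_dihedral_even (m : ℕ) (hm : 0 < m) (heven : Even m)
    (ℓ : ℕ) (hℓ : 2 ≤ ℓ) :
    2 * Nat.card (Quot (conjRel (DihedralGroup m) ℓ)) =
      4 ^ ℓ + 2 * m ^ (ℓ - 1) * (2 ^ ℓ - 1) + m ^ ℓ := by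
  classical
  haveI : NeZero m := ⟨hm.ne'⟩
  haveI : ∀ a : ConjAct (DihedralGroup m), Fintype (fixedBy (Fin ℓ → DihedralGroup m) a) := fun a => Fintype.ofFinite _
  haveI : Fintype (Quotient (orbitRel (ConjAct (DihedralGroup m)) (Fin ℓ → DihedralGroup m))) := Fintype.ofFinite _
  -- the two quotients agree
  have hrel : ∀ s t : Fin ℓ → DihedralGroup m, conjRel (DihedralGroup m) ℓ s t ↔ (orbitRel (ConjAct (DihedralGroup m)) (Fin ℓ → DihedralGroup m)).r s t := by
    intro s t
    constructor
    · rintro ⟨g, hg⟩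
      refine ⟨ConjAct.toConjAct g⁻¹, funext fun i => ?_⟩
      show ConjAct.toConjAct g⁻¹ • t i = s i
      rw [ConjAct.smul_def, ConjAct.ofConjAct_toConjAct, hg i]
      group
    · rintro ⟨a, ha⟩
      refine ⟨(ConjAct.ofConjAct a)⁻¹, fun i => ?_⟩
      have h1 : a • t i = s i := congrFun ha i
      rw [ConjAct.smul_def] at h1
      rw [← h1]
      group
  have equot : Quot (conjRel (DihedralGroup m) ℓ) ≃ Quotient (orbitRel (ConjAct (DihedralGroup m)) (Fin ℓ → DihedralGroup m)) :=
    Quot.congrRight hrel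
  -- Burnside
  have burnside := sum_card_fixedBy_eq_card_orbits_mul_card_group (ConjAct (DihedralGroup m)) (Fin ℓ → DihedralGroup m)
  -- fixed points of `a` are tuples of elements commuting with `a`
  have hfix : ∀ a : ConjAct (DihedralGroup m),
      Fintype.card (fixedBy (Fin ℓ → DihedralGroup m) a) = cc m (ConjAct.ofConjAct a) ^ ℓ := by
    intro a
    have e1 : fixedBy (Fin ℓ → DihedralGroup m) a ≃ (Fin ℓ → {x : DihedralGroup m //
        ConjAct.ofConjAct a * x = x * ConjAct.ofConjAct a}) := by
      refine ((Equiv.subtypeEquivRight (q := fun s : Fin ℓ → DihedralGroup m => ∀ i,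
        ConjAct.ofConjAct a * s i = s i * ConjAct.ofConjAct a) fun s => ?_).trans
        (Equiv.subtypePiEquivPi (p := fun (_ : Fin ℓ) (x : DihedralGroup m) =>
          ConjAct.ofConjAct a * x = x * ConjAct.ofConjAct a)))
      show a • s = s ↔ _
      rw [funext_iff]
      refine forall_congr' fun i => ?_
      rw [show (a • s) i = a • s i from rfl, ConjAct.smul_def, mul_inv_eq_iff_eq_mul]
    rw [Fintype.card_congr e1, Fintype.card_fun, Fintype.card_fin, cc]
  -- compute the Burnside sum
  have T2 : Fintype.card {j : ZMod m // -j = j} = 2 := card_torsion m hm heven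
  have hcrsum : ∑ i : ZMod m, cc m (DihedralGroup.r i) ^ ℓ =
      2 * (2 * m) ^ ℓ + (m - 2) * m ^ ℓ := by
    have : ∀ i : ZMod m, cc m (DihedralGroup.r i) ^ ℓ =
        if -i = i then (2 * m) ^ ℓ else m ^ ℓ := by
      intro i; rw [cc_r, apply_ite (· ^ ℓ)]
    rw [Finset.sum_congr rfl fun i _ => this i, Finset.sum_ite, Finset.sum_const,
      Finset.sum_const, smul_eq_mul, smul_eq_mul]
    have hcard1 : (Finset.univ.filter fun i : ZMod m => -i = i).card = 2 := by
      rw [← T2, Fintype.card_subtype]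
    have hcard2 : (Finset.univ.filter fun i : ZMod m => ¬(-i = i)).card = m - 2 := by
      have := Finset.card_filter_add_card_filter_not
        (s := (Finset.univ : Finset (ZMod m))) (p := fun i => -i = i)
      rw [Finset.card_univ, ZMod.card] at this
      omega
    rw [hcard1, hcard2]
  have hcsrsum : ∑ i : ZMod m, cc m (DihedralGroup.sr i) ^ ℓ = m * 4 ^ ℓ := by
    have : ∀ i : ZMod m, cc m (DihedralGroup.sr i) ^ ℓ = 4 ^ ℓ := by
      intro i; rw [cc_sr, T2]
    rw [Finset.sum_congr rfl fun i _ => this i, Finset.sum_const, smul_eq_mul,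
      Finset.card_univ, ZMod.card]
  have hsum : ∑ a : ConjAct (DihedralGroup m), Fintype.card (fixedBy (Fin ℓ → DihedralGroup m) a) =
      2 * (2 * m) ^ ℓ + (m - 2) * m ^ ℓ + m * 4 ^ ℓ := by
    rw [← Fintype.sum_equiv (ConjAct.toConjAct (G := DihedralGroup m)).toEquiv
      (fun x : DihedralGroup m => cc m x ^ ℓ) (fun a => Fintype.card (fixedBy (Fin ℓ → DihedralGroup m) a))
      (fun x => by simpa using (hfix (ConjAct.toConjAct x)).symm),
      ← Equiv.sum_comp (dequiv m).symm (fun x : DihedralGroup m => cc m x ^ ℓ),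
      Fintype.sum_sum_type]
    have e1 : ∑ i : ZMod m, cc m ((dequiv m).symm (Sum.inl i)) ^ ℓ =
        ∑ i : ZMod m, cc m (DihedralGroup.r i) ^ ℓ := rfl
    have e2 : ∑ i : ZMod m, cc m ((dequiv m).symm (Sum.inr i)) ^ ℓ =
        ∑ i : ZMod m, cc m (DihedralGroup.sr i) ^ ℓ := rfl
    rw [e1, e2, hcrsum, hcsrsum]
  -- assemble
  rw [hsum] at burnside
  have hcardG : Fintype.card (ConjAct (DihedralGroup m)) = 2 * m := by
    rw [Fintype.card_congr (ConjAct.toConjAct (G := DihedralGroup m)).toEquiv.symm,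
      DihedralGroup.card]
  rw [hcardG] at burnside
  have hquot : Nat.card (Quot (conjRel (DihedralGroup m) ℓ)) =
      Fintype.card (Quotient (orbitRel (ConjAct (DihedralGroup m)) (Fin ℓ → DihedralGroup m))) := by
    rw [Nat.card_congr equot, Nat.card_eq_fintype_card]
  rw [hquot]
  set N := Fintype.card (Quotient (orbitRel (ConjAct (DihedralGroup m)) (Fin ℓ → DihedralGroup m))) with hN
  -- arithmetic
  have h2m : 2 ≤ m := by
    obtain ⟨k, hk⟩ := heven; omega
  have h1P : 1 ≤ 2 ^ ℓ := Nat.one_le_two_pow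
  have hQ : m ^ (ℓ - 1) * m = m ^ ℓ := by
    rw [← pow_succ]; congr 1; omega
  refine Nat.eq_of_mul_eq_mul_left hm ?_
  have h4 : (4 : ℕ) ^ ℓ = 2 ^ ℓ * 2 ^ ℓ := by
    rw [← mul_pow]; norm_num
  have h2mpow : (2 * m) ^ ℓ = 2 ^ ℓ * m ^ ℓ := mul_pow 2 m ℓ
  rw [h4, h2mpow] at burnside
  rw [h4]
  zify [h2m, h1P] at burnside hQ ⊢
  linear_combination (-1 : ℤ) * burnside - 2 * ((2:ℤ) ^ ℓ - 1) * hQ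
end
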